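/- arXiv:2604.06228 — 4 statements merged into one kernel-verified Lean document; each statement's English description precedes it below -/
import Mathlib

section
/- (Child intervals are nested and siblings are disjoint; correctness of the recursive subdivision.) For every finite sequence x over V and every token t ∈ V, the child interval satisfies I_{x ++ [t]} ⊆ I_x; moreover, for distinct tokens t ≠ u in V, the sibling intervals are disjoint: I_{x ++ [t]} ∩ I_{x ++ [u]} = ∅. -/
open Finset

/-- Cumulative probability `C_t(x) = ∑_{u : σ u < σ t} P(u | x)`. -/
noncomputable def cdf {V : Type*} [Fintype V] (P : List V → V → ℝ) (σ : V → ℕ)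
    (x : List V) (t : V) : ℝ :=
  ∑ u ∈ Finset.univ.filter (fun u => σ u < σ t), P x u

/-- Endpoints of the interval `I_{x ++ s}`, given that `I_x = [ab.1, ab.2)`:
starting from prefix `x` with interval endpoints `ab`, process the tokens of `s`
one by one, replacing the current interval `[a, b)` by the child interval
`[a + (b-a)·C_t(x), a + (b-a)·(C_t(x) + P(t|x)))`. -/
noncomputable def endsAux {V : Type*} [Fintype V] (P : List V → V → ℝ) (σ : V → ℕ) :
    List V → List V → ℝ × ℝ → ℝ × ℝ
  | _, [], ab => ab
  | x, t :: r, ab =>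
      endsAux P σ (x ++ [t]) r
        (ab.1 + (ab.2 - ab.1) * cdf P σ x t,
         ab.1 + (ab.2 - ab.1) * (cdf P σ x t + P x t))

/-- Endpoints of the interval `I_s` (starting from `I_{[]} = [0,1)`). -/
noncomputable def ends {V : Type*} [Fintype V] (P : List V → V → ℝ) (σ : V → ℕ)
    (s : List V) : ℝ × ℝ :=
  endsAux P σ [] s ((0 : ℝ), (1 : ℝ))

/-- The half-open interval `I_s ⊆ ℝ`. -/
noncomputable def interval {V : Type*} [Fintype V] (P : List V → V → ℝ) (σ : V → ℕ)
    (s : List V) : Set ℝ :=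
  Set.Ico (ends P σ s).1 (ends P σ s).2


lemma endsAux_append {V : Type*} [Fintype V] (P : List V → V → ℝ) (σ : V → ℕ) :
    ∀ (s x : List V) (t : V) (ab : ℝ × ℝ),
      endsAux P σ x (s ++ [t]) ab =
        ((endsAux P σ x s ab).1 +
            ((endsAux P σ x s ab).2 - (endsAux P σ x s ab).1) * cdf P σ (x ++ s) t,
         (endsAux P σ x s ab).1 +
            ((endsAux P σ x s ab).2 - (endsAux P σ x s ab).1) *
              (cdf P σ (x ++ s) t + P (x ++ s) t))
  | [], x, t, ab => by simp [endsAux]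
  | a :: r, x, t, ab => by
      simp only [List.cons_append, endsAux, List.append_eq, endsAux_append P σ r (x ++ [a]) t,
        List.append_assoc, List.singleton_append, List.nil_append]

lemma ends_append {V : Type*} [Fintype V] (P : List V → V → ℝ) (σ : V → ℕ)
    (x : List V) (t : V) :
    ends P σ (x ++ [t]) =
      ((ends P σ x).1 + ((ends P σ x).2 - (ends P σ x).1) * cdf P σ x t,
       (ends P σ x).1 + ((ends P σ x).2 - (ends P σ x).1) * (cdf P σ x t + P x t)) := by
  simp [ends, endsAux_append]

lemma endsAux_le {V : Type*} [Fintype V] (P : List V → V → ℝ) (σ : V → ℕ)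
    (hP0 : ∀ (x : List V) (t : V), 0 ≤ P x t) :
    ∀ (s x : List V) (ab : ℝ × ℝ), ab.1 ≤ ab.2 →
      (endsAux P σ x s ab).1 ≤ (endsAux P σ x s ab).2
  | [], x, ab, h => h
  | t :: r, x, ab, h => by
      apply endsAux_le P σ hP0 r
      have := hP0 x t
      simp only
      nlinarith

lemma ends_le {V : Type*} [Fintype V] (P : List V → V → ℝ) (σ : V → ℕ)
    (hP0 : ∀ (x : List V) (t : V), 0 ≤ P x t) (s : List V) :
    (ends P σ s).1 ≤ (ends P σ s).2 :=
  endsAux_le P σ hP0 s [] _ (by norm_num)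

lemma cdf_nonneg {V : Type*} [Fintype V] (P : List V → V → ℝ) (σ : V → ℕ)
    (hP0 : ∀ (x : List V) (t : V), 0 ≤ P x t) (x : List V) (t : V) :
    0 ≤ cdf P σ x t :=
  Finset.sum_nonneg fun u _ => hP0 x u

lemma cdf_add_le {V : Type*} [Fintype V] (P : List V → V → ℝ) (σ : V → ℕ)
    (hP0 : ∀ (x : List V) (t : V), 0 ≤ P x t) (x : List V) (t u : V)
    (h : σ t < σ u) : cdf P σ x t + P x t ≤ cdf P σ x u := by
  classical
  have ht : t ∉ Finset.univ.filter (fun v => σ v < σ t) := by simp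
  have hsub : insert t (Finset.univ.filter (fun v => σ v < σ t)) ⊆
      Finset.univ.filter (fun v => σ v < σ u) := by
    intro v hv
    simp only [Finset.mem_insert, Finset.mem_filter, Finset.mem_univ, true_and] at hv ⊢
    rcases hv with rfl | hv
    · exact h
    · omega
  calc cdf P σ x t + P x t = ∑ v ∈ insert t (Finset.univ.filter (fun v => σ v < σ t)), P x v := by
        rw [Finset.sum_insert ht, cdf]; ring
    _ ≤ cdf P σ x u := Finset.sum_le_sum_of_subset_of_nonneg hsub fun v _ _ => hP0 x v

lemma cdf_add_le_one {V : Type*} [Fintype V] (P : List V → V → ℝ) (σ : V → ℕ)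
    (hP0 : ∀ (x : List V) (t : V), 0 ≤ P x t)
    (hPsum : ∀ x : List V, ∑ t, P x t ≤ 1) (x : List V) (t : V) :
    cdf P σ x t + P x t ≤ 1 := by
  classical
  have ht : t ∉ Finset.univ.filter (fun v => σ v < σ t) := by simp
  calc cdf P σ x t + P x t = ∑ v ∈ insert t (Finset.univ.filter (fun v => σ v < σ t)), P x v := by
        rw [Finset.sum_insert ht, cdf]; ring
    _ ≤ ∑ v, P x v := Finset.sum_le_sum_of_subset_of_nonneg (Finset.subset_univ _)
        fun v _ _ => hP0 x v
    _ ≤ 1 := hPsum x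

/-- **Child intervals are nested; sibling intervals are disjoint.**
For every finite sequence `x` over `V` and tokens `t ≠ u`, the child interval satisfies
`I_{x ++ [t]} ⊆ I_x`, and sibling intervals are disjoint: `I_{x ++ [t]} ∩ I_{x ++ [u]} = ∅`. -/
theorem child_nested_siblings_disjoint {V : Type*} [Fintype V] [Nonempty V]
    (P : List V → V → ℝ)
    (hP0 : ∀ (x : List V) (t : V), 0 ≤ P x t)
    (hPsum : ∀ x : List V, ∑ t, P x t ≤ 1)
    (σ : V → ℕ) (hσ : Function.Injective σ) :
    (∀ (x : List V) (t : V), interval P σ (x ++ [t]) ⊆ interval P σ x) ∧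
    (∀ (x : List V) (t u : V), t ≠ u →
      interval P σ (x ++ [t]) ∩ interval P σ (x ++ [u]) = ∅) := by
  constructor
  · intro x t y hy
    rw [interval, ends_append] at hy
    obtain ⟨h1, h2⟩ := hy
    have hw : (ends P σ x).1 ≤ (ends P σ x).2 := ends_le P σ hP0 x
    have hc0 := cdf_nonneg P σ hP0 x t
    have hc1 := cdf_add_le_one P σ hP0 hPsum x t
    constructor <;> simp only at h1 h2 <;> nlinarith
  · intro x t u htu
    rcases Nat.lt_or_ge (σ t) (σ u) with h | h
    · have key := cdf_add_le P σ hP0 x t u h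
      have hw : (ends P σ x).1 ≤ (ends P σ x).2 := ends_le P σ hP0 x
      ext y
      simp only [Set.mem_inter_iff, Set.mem_empty_iff_false, iff_false,
        interval, ends_append, Set.mem_Ico]
      rintro ⟨⟨h1, h2⟩, ⟨h3, h4⟩⟩
      nlinarith
    · have hne : σ u < σ t := lt_of_le_of_ne (by omega) fun e => htu (hσ e).symm
      have key := cdf_add_le P σ hP0 x u t hne
      have hw : (ends P σ x).1 ≤ (ends P σ x).2 := ends_le P σ hP0 x
      ext y
      simp only [Set.mem_inter_iff, Set.mem_empty_iff_false, iff_false,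
        interval, ends_append, Set.mem_Ico]
      rintro ⟨⟨h1, h2⟩, ⟨h3, h4⟩⟩
      nlinarith
end

section
/- (Lemma 5.4, pairwise ranking bound.) Fix indices j and l with 1 ≤ j ≤ K < l ≤ M, so that p_j − p_l ≥ Δ > 0. For T ≥ 1, let n_j(T) = #{k ≤ T : r_k = j} and n_l(T) = #{k ≤ T : r_k = l} be the empirical request counts. Then ℙ(n_j(T) ≤ n_l(T)) ≤ exp(−T·Δ²/2). -/
/-!
With `X k = 𝟙[r k = l] - 𝟙[r k = j]`, the event `n_j(T) ≤ n_l(T)` is `0 ≤ ∑_{k<T} X k`.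
The `X k` are independent, take values in `[-1, 1]` and have mean `p_l - p_j ≤ -Δ`, so the event
forces the centred sum to exceed its mean by at least `TΔ`, and Hoeffding's inequality bounds its
probability by `exp (-2 (TΔ)² / (T · 2²)) = exp (-TΔ²/2)`.
-/

open MeasureTheory ProbabilityTheory Finset

lemma sum_indicator_singleton_comp {ι α : Type*} [DecidableEq α] (s : Finset ι) (f : ι → α)
    (a : α) : ∑ i ∈ s, ({a} : Set α).indicator (1 : α → ℝ) (f i) = #{i ∈ s | f i = a} := by
  simp [Set.indicator_apply]

section Measure

variable {Ω : Type*} [MeasurableSpace Ω] {μ : Measure Ω}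

lemma integral_indicator_sub_indicator_comp [IsFiniteMeasure μ] {α : Type*} [MeasurableSpace α]
    [MeasurableSingletonClass α] {Y : Ω → α} (hY : Measurable Y) (a b : α) :
    ∫ ω, (({a} : Set α).indicator 1 - ({b} : Set α).indicator 1 : α → ℝ) (Y ω) ∂μ =
      μ.real {ω | Y ω = a} - μ.real {ω | Y ω = b} := by
  have hpre (c : α) : MeasurableSet {ω | Y ω = c} := hY (measurableSet_singleton c)
  rw [← integral_indicator_one (hpre a), ← integral_indicator_one (hpre b),
    ← integral_sub ((integrable_const 1).indicator (hpre a))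
      ((integrable_const 1).indicator (hpre b))]
  rfl

theorem measureReal_zero_le_sum_le_exp_of_mem_Icc [IsProbabilityMeasure μ] {X : ℕ → Ω → ℝ}
    (hmeas : ∀ k, AEMeasurable (X k) μ) (hindep : iIndepFun X μ) {a b δ : ℝ}
    (hbound : ∀ k, ∀ᵐ ω ∂μ, X k ω ∈ Set.Icc a b) (hδ : 0 ≤ δ) (hmean : ∀ k, μ[X k] ≤ -δ)
    (T : ℕ) :
    μ.real {ω | 0 ≤ ∑ k ∈ range T, X k ω} ≤ Real.exp (-2 * T * δ ^ 2 / (b - a) ^ 2) := by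
  have hcentered : iIndepFun (fun k ω ↦ X k ω - μ[X k]) μ :=
    hindep.comp (fun k x ↦ x - ∫ ω, X k ω ∂μ) fun _ ↦ measurable_sub_const _
  have hoeffding := HasSubgaussianMGF.measure_sum_range_ge_le_of_iIndepFun (n := T) hcentered
    (fun k _ ↦ hasSubgaussianMGF_of_mem_Icc (hmeas k) (hbound k)) (by positivity : 0 ≤ T * δ)
  have hsub : {ω | 0 ≤ ∑ k ∈ range T, X k ω} ⊆
      {ω | T * δ ≤ ∑ k ∈ range T, (X k ω - μ[X k])} := by
    intro ω (hω : 0 ≤ ∑ k ∈ range T, X k ω)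
    show (T : ℝ) * δ ≤ _
    have : ∑ k ∈ range T, μ[X k] ≤ ∑ k ∈ range T, -δ := sum_le_sum fun k _ ↦ hmean k
    simp only [sum_sub_distrib, sum_const, card_range, nsmul_eq_mul] at this ⊢
    linarith
  refine (measureReal_mono hsub).trans (hoeffding.trans_eq ?_)
  congr 1
  rcases eq_or_ne (T : ℝ) 0 with hT | hT
  · simp [hT]
  · push_cast
    rw [Real.norm_eq_abs, div_pow, sq_abs, ← mul_div_mul_left (-2 * T * δ ^ 2) _ hT]
    generalize (b - a) ^ 2 = c
    ring

end Measure

/-- **Pairwise ranking bound, Lemma 5.4.** Let `(r_k)` be i.i.d.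
`Fin M`-valued requests with `ℙ(r_k = j) = p_j`, where `p_1 ≥ ⋯ ≥ p_M > 0` sum to one.
Fix `1 ≤ K < M` and set `Δ = p_K - p_{K+1} > 0`.  For indices `j ≤ K < l` and `T ≥ 1`
requests, the probability that the empirical count of `j` does not exceed that of `l`
is at most `exp(-T·Δ²/2)`. -/
theorem pairwise_ranking_bound {Ω : Type*} [MeasurableSpace Ω]
    (μ : Measure Ω) [IsProbabilityMeasure μ]
    (M : ℕ) (p : Fin M → ℝ)
    (hmono : ∀ i j : Fin M, i ≤ j → p j ≤ p i)
    (hpos : ∀ j : Fin M, 0 < p j)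
    (r : ℕ → Ω → Fin M)
    (hmeas : ∀ k, Measurable (r k))
    (hindep : iIndepFun r μ)
    (hdist : ∀ (k : ℕ) (j : Fin M), μ {ω | r k ω = j} = ENNReal.ofReal (p j))
    (K : ℕ) (hKM : K < M)
    (j l : Fin M) (hj : (j : ℕ) < K) (hl : K ≤ (l : ℕ))
    (T : ℕ) :
    μ {ω | ((Finset.range T).filter (fun k => r k ω = j)).card
            ≤ ((Finset.range T).filter (fun k => r k ω = l)).card}
      ≤ ENNReal.ofReal
          (Real.exp (-(T : ℝ) * (p ⟨K - 1, by omega⟩ - p ⟨K, hKM⟩) ^ 2 / 2)) := by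
  classical
  set δ := p ⟨K - 1, by omega⟩ - p ⟨K, hKM⟩
  have hδ : 0 ≤ δ := sub_nonneg.2 (hmono _ _ (Fin.mk_le_mk.2 (Nat.sub_le K 1)))
  have hgap : p l - p j ≤ -δ := by
    have := hmono j ⟨K - 1, by omega⟩ (Fin.mk_le_mk.2 (by omega))
    have := hmono ⟨K, hKM⟩ l (Fin.mk_le_mk.2 hl)
    linarith
  let φ : Fin M → ℝ := ({l} : Set (Fin M)).indicator 1 - ({j} : Set (Fin M)).indicator 1
  have hφ : Measurable φ := measurable_of_countable φ
  have hprob (k : ℕ) (i : Fin M) : μ.real {ω | r k ω = i} = p i := by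
    rw [measureReal_def, hdist, ENNReal.toReal_ofReal (hpos i).le]
  have hmean (k : ℕ) : μ[φ ∘ r k] ≤ -δ :=
    (integral_indicator_sub_indicator_comp (hmeas k) l j).trans_le (by rwa [hprob, hprob])
  have hbound (k : ℕ) (ω : Ω) : (φ ∘ r k) ω ∈ Set.Icc (-1) 1 := by
    simp only [φ, Function.comp_apply, Pi.sub_apply, Set.indicator_apply]
    constructor <;> split_ifs <;> norm_num
  have hevent : {ω | #{k ∈ range T | r k ω = j} ≤ #{k ∈ range T | r k ω = l}} ⊆
      {ω | 0 ≤ ∑ k ∈ range T, (φ ∘ r k) ω} := by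
    intro ω (hω : #{k ∈ range T | r k ω = j} ≤ #{k ∈ range T | r k ω = l})
    show 0 ≤ ∑ k ∈ range T, φ (r k ω)
    simp only [φ, Pi.sub_apply, sum_sub_distrib, sum_indicator_singleton_comp, sub_nonneg]
    exact_mod_cast hω
  have hoeffding := measureReal_zero_le_sum_le_exp_of_mem_Icc
    (fun k ↦ (hφ.comp (hmeas k)).aemeasurable) (hindep.comp (fun _ ↦ φ) fun _ ↦ hφ)
    (fun k ↦ ae_of_all _ (hbound k)) hδ hmean T
  rw [ENNReal.le_ofReal_iff_toReal_le (measure_ne_top _ _) (Real.exp_pos _).le]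
  exact (measureReal_mono hevent).trans (hoeffding.trans_eq (by congr 1; ring))
end

section
/- (Lemma 5.4, union bound and ranking threshold T_rank.) For T ≥ 1, let n_j(T) = #{k ≤ T : r_k = j} denote the empirical request counts. Then ℙ(∃ j ≤ K and l > K with n_j(T) ≤ n_l(T)) ≤ K·(M − K)·exp(−T·Δ²/2). Consequently, for any δ ∈ (0, 1), if T ≥ (2/Δ²)·ln(K·(M − K)/δ), then ℙ(∃ j ≤ K and l > K with n_j(T) ≤ n_l(T)) ≤ δ. -/
/-!
For a fixed pair `j < K ≤ l` the increments `1[r_k = j] - 1[r_k = l]` are independent, take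
values in `[-1, 1]` and have mean `p_j - p_l ≥ Δ`, so by Hoeffding's inequality the count of `j`
fails to exceed the count of `l` with probability at most `exp (-T Δ² / 2)`. A union bound over
the `K (M - K)` pairs gives the first claim; the second is the first with the threshold on `T`
substituted.
-/

open MeasureTheory ProbabilityTheory Finset Real

lemma measureReal_exists_pair_le {Ω ι κ : Type*} [MeasurableSpace Ω] {μ : Measure Ω}
    [Fintype ι] [Fintype κ] {P : ι → Prop} {Q : κ → Prop} [DecidablePred P] [DecidablePred Q]
    {A : ι → κ → Set Ω} {b : ℝ}
    (hA : ∀ i j, P i → Q j → μ.real (A i j) ≤ b) :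
    μ.real {ω | ∃ i j, P i ∧ Q j ∧ ω ∈ A i j} ≤ #{i | P i} * #{j | Q j} * b := by
  set S : Finset (ι × κ) := ({i | P i} : Finset ι) ×ˢ ({j | Q j} : Finset κ)
  have hunion : {ω | ∃ i j, P i ∧ Q j ∧ ω ∈ A i j} = ⋃ q ∈ S, A q.1 q.2 := by
    ext; simp [S, and_assoc]
  calc _ ≤ ∑ q ∈ S, μ.real (A q.1 q.2) := hunion ▸ measureReal_biUnion_finset_le _ _
    _ ≤ ∑ q ∈ S, b := sum_le_sum fun q hq ↦ by
        simp only [S, mem_product, mem_filter_univ] at hq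
        exact hA _ _ hq.1 hq.2
    _ = _ := by simp [S, card_product]

section

variable {α : Type*} [DecidableEq α]

def countDiff (j l : α) (a : α) : ℝ := (if a = j then 1 else 0) - (if a = l then 1 else 0)

lemma countDiff_mem_Icc (j l a : α) : countDiff j l a ∈ Set.Icc (-1) 1 := by
  unfold countDiff; split_ifs <;> norm_num

lemma sum_countDiff (r : ℕ → α) (j l : α) (T : ℕ) :
    ∑ k ∈ range T, countDiff j l (r k) = #{k ∈ range T | r k = j} - #{k ∈ range T | r k = l} := by
  simp only [countDiff, sum_sub_distrib, natCast_card_filter]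

variable [MeasurableSpace α] [MeasurableSingletonClass α]

lemma measurable_countDiff (j l : α) : Measurable (countDiff j l) :=
  (measurable_const.ite (measurableSet_singleton j) measurable_const).sub
    (measurable_const.ite (measurableSet_singleton l) measurable_const)

variable {Ω : Type*} [MeasurableSpace Ω] {μ : Measure Ω}

lemma integral_countDiff_comp [IsFiniteMeasure μ] {X : Ω → α} (hX : Measurable X) (j l : α) :
    ∫ ω, countDiff j l (X ω) ∂μ = μ.real {ω | X ω = j} - μ.real {ω | X ω = l} := by
  have hind (i : α) : (fun ω ↦ if X ω = i then (1 : ℝ) else 0) = (X ⁻¹' {i}).indicator 1 := by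
    ext ω
    by_cases h : X ω = i <;> simp [h]
  have hmeas (i : α) : MeasurableSet (X ⁻¹' {i}) := hX (measurableSet_singleton i)
  simp only [countDiff]
  rw [integral_sub, hind, hind, integral_indicator_one (hmeas j), integral_indicator_one (hmeas l)]
  · rfl
  all_goals rw [hind]; exact (integrable_const 1).indicator (hmeas _)

theorem measureReal_card_filter_le_card_filter_le_exp [IsProbabilityMeasure μ] {r : ℕ → Ω → α}
    (hmeas : ∀ k, Measurable (r k)) (hindep : iIndepFun r μ) {j l : α} {d : ℝ} (hd : 0 ≤ d)
    (hgap : ∀ k, μ.real {ω | r k ω = l} + d ≤ μ.real {ω | r k ω = j}) (T : ℕ) :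
    μ.real {ω | #{k ∈ range T | r k ω = j} ≤ #{k ∈ range T | r k ω = l}}
      ≤ exp (-T * d ^ 2 / 2) := by
  set m : ℕ → ℝ := fun k ↦ ∫ ω, countDiff j l (r k ω) ∂μ
  set Z : ℕ → Ω → ℝ := fun k ω ↦ m k - countDiff j l (r k ω)
  have hm (k : ℕ) : d ≤ m k := by
    simp only [m, integral_countDiff_comp (hmeas k)]
    linarith [hgap k]
  have hZindep : iIndepFun Z μ :=
    hindep.comp (fun k a ↦ m k - countDiff j l a)
      (fun _ ↦ measurable_const.sub (measurable_countDiff j l))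
  have hZ (k : ℕ) (_ : k < T) : HasSubgaussianMGF (Z k) 1 μ := by
    have hoeffding := (hasSubgaussianMGF_of_mem_Icc (μ := μ)
      ((measurable_countDiff j l).comp (hmeas k)).aemeasurable
      (ae_of_all _ fun ω ↦ countDiff_mem_Icc j l (r k ω))).neg
    convert hoeffding using 1
    · ext ω; simp [Z, m]
    · norm_num
  have hevent : {ω | #{k ∈ range T | r k ω = j} ≤ #{k ∈ range T | r k ω = l}}
      ⊆ {ω | T * d ≤ ∑ k ∈ range T, Z k ω} := by
    intro ω (hω : #{k ∈ range T | r k ω = j} ≤ #{k ∈ range T | r k ω = l})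
    have hsum : T * d ≤ ∑ k ∈ range T, m k := by
      simpa using sum_le_sum fun k (_ : k ∈ range T) ↦ hm k
    have hcount : (#{k ∈ range T | r k ω = j} : ℝ) ≤ #{k ∈ range T | r k ω = l} := by
      exact_mod_cast hω
    show T * d ≤ ∑ k ∈ range T, (m k - countDiff j l (r k ω))
    rw [sum_sub_distrib, sum_countDiff (r · ω)]
    linarith
  calc _ ≤ μ.real {ω | T * d ≤ ∑ k ∈ range T, Z k ω} := measureReal_mono hevent
    _ ≤ exp (-(T * d) ^ 2 / (2 * T * (1 : NNReal))) :=
      HasSubgaussianMGF.measure_sum_range_ge_le_of_iIndepFun hZindep hZ (by positivity)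
    _ = exp (-T * d ^ 2 / 2) := by
      rcases eq_or_ne T 0 with rfl | _
      · simp
      · congr 1; push_cast; field_simp

end

lemma mul_exp_neg_le_of_log_div_le {C δ d T : ℝ} (hδ : 0 < δ) (hd : d ≠ 0)
    (h : 2 / d ^ 2 * log (C / δ) ≤ T) : C * exp (-T * d ^ 2 / 2) ≤ δ := by
  rcases le_or_gt C 0 with hC | hC
  · exact (mul_nonpos_of_nonpos_of_nonneg hC (exp_pos _).le).trans hδ.le
  have hlog : log (C / δ) ≤ T * d ^ 2 / 2 := by
    rw [div_mul_eq_mul_div, div_le_iff₀ (by positivity)] at h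
    linarith
  have hexp : C / δ ≤ exp (T * d ^ 2 / 2) := (log_le_iff_le_exp (by positivity)).1 hlog
  rw [div_le_iff₀ hδ] at hexp
  rw [neg_mul, neg_div, exp_neg, ← div_eq_mul_inv, div_le_iff₀ (exp_pos _)]
  linarith

/-- **Union bound and ranking threshold, Lemma 5.4.** With i.i.d.
requests as above, the probability that some top-`K` index is outcounted by some
index beyond `K` after `T` requests is at most `K·(M-K)·exp(-T·Δ²/2)`; consequently,
for `δ ∈ (0,1)`, it is at most `δ` once `T ≥ (2/Δ²)·ln(K·(M-K)/δ)`. -/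
theorem ranking_union_bound {Ω : Type*} [MeasurableSpace Ω]
    (μ : Measure Ω) [IsProbabilityMeasure μ]
    (M : ℕ) (p : Fin M → ℝ)
    (hmono : ∀ i j : Fin M, i ≤ j → p j ≤ p i)
    (hpos : ∀ j : Fin M, 0 < p j)
    (r : ℕ → Ω → Fin M)
    (hmeas : ∀ k, Measurable (r k))
    (hindep : iIndepFun r μ)
    (hdist : ∀ (k : ℕ) (j : Fin M), μ {ω | r k ω = j} = ENNReal.ofReal (p j))
    (K : ℕ) (hKM : K < M)
    (hΔpos : 0 < p ⟨K - 1, by omega⟩ - p ⟨K, hKM⟩)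
    (T : ℕ) :
    μ {ω | ∃ j l : Fin M, (j : ℕ) < K ∧ K ≤ (l : ℕ) ∧
            ((Finset.range T).filter (fun k => r k ω = j)).card
              ≤ ((Finset.range T).filter (fun k => r k ω = l)).card}
      ≤ ENNReal.ofReal ((K : ℝ) * ((M : ℝ) - (K : ℝ)) *
          Real.exp (-(T : ℝ) * (p ⟨K - 1, by omega⟩ - p ⟨K, hKM⟩) ^ 2 / 2)) ∧
    (∀ δ : ℝ, 0 < δ → δ < 1 →
      (2 / (p ⟨K - 1, by omega⟩ - p ⟨K, hKM⟩) ^ 2) *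
          Real.log ((K : ℝ) * ((M : ℝ) - (K : ℝ)) / δ) ≤ (T : ℝ) →
      μ {ω | ∃ j l : Fin M, (j : ℕ) < K ∧ K ≤ (l : ℕ) ∧
              ((Finset.range T).filter (fun k => r k ω = j)).card
                ≤ ((Finset.range T).filter (fun k => r k ω = l)).card}
        ≤ ENNReal.ofReal δ) := by
  set Δ := p ⟨K - 1, by omega⟩ - p ⟨K, hKM⟩
  have hprob (k : ℕ) (j : Fin M) : μ.real {ω | r k ω = j} = p j := by
    rw [measureReal_def, hdist, ENNReal.toReal_ofReal (hpos j).le]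
  have hpair (j l : Fin M) (hj : (j : ℕ) < K) (hl : K ≤ (l : ℕ)) :
      μ.real {ω | #{k ∈ range T | r k ω = j} ≤ #{k ∈ range T | r k ω = l}}
        ≤ exp (-T * Δ ^ 2 / 2) := by
    refine measureReal_card_filter_le_card_filter_le_exp hmeas hindep hΔpos.le (fun k ↦ ?_) T
    have hj' := hmono j ⟨K - 1, by omega⟩ (Fin.le_def.2 (show (j : ℕ) ≤ K - 1 by omega))
    have hl' := hmono ⟨K, hKM⟩ l (Fin.le_def.2 hl)
    rw [hprob, hprob]
    linarith
  have hcard_lt : #{j : Fin M | (j : ℕ) < K} = K := by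
    rw [Fin.card_filter_val_lt, min_eq_right hKM.le]
  have hcard_ge : #{l : Fin M | K ≤ (l : ℕ)} = M - K := by
    rw [filter_congr (fun l _ ↦ not_lt.symm), filter_not, card_sdiff_of_subset (filter_subset _ _),
      hcard_lt, card_univ, Fintype.card_fin]
  have hMK : (0 : ℝ) ≤ M - K := by
    rw [sub_nonneg]; exact_mod_cast hKM.le
  have hbound := measureReal_exists_pair_le hpair
  rw [hcard_lt, hcard_ge, Nat.cast_sub hKM.le] at hbound
  have hmain := (ENNReal.le_ofReal_iff_toReal_le (measure_ne_top _ _) (by positivity)).2 hbound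
  exact ⟨hmain, fun δ hδ _ hTδ ↦
    hmain.trans (ENNReal.ofReal_le_ofReal (mul_exp_neg_le_of_log_div_le hδ hΔpos.ne' hTδ))⟩
end

section
/- (Theorem 5.6, prior-guided caching advantage.) Let C_c > C_l ≥ 0 be reals (compute cost and lookup cost) and set ρ = C_c − C_l. For a set C ⊆ Fin M define the expected per-request cost cost(C) = (1 − ∑_{i ∈ C} p_i)·C_c + (∑_{i ∈ C} p_i)·C_l, and let C^prior = (1 − p*)·C_c + p*·C_l be the cost of the prior-guided cache {1, …, K}. Fix T ≥ 1 and let C_T be any random subset of Fin M that is a measurable function of (r_1, …, r_T), satisfies |C_T| ≤ K, and contains only previously requested items: C_T ⊆ {r_1, …, r_T}. Then 𝔼[cost(C_T)] − C^prior ≥ Δ·ρ·(1 − T·p_K). In particular the expected advantage of the prior-guided cache is strictly positive whenever Δ > 0 and T < 1/p_K. -/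
open MeasureTheory ProbabilityTheory Finset

/-! Write `j₀` for the `K`-th most likely item. Exchanging items outside the top `K` for items
inside shows that a cache of size at most `K` has mass at most `p*`, and at most `p* - Δ` when
it misses `j₀`. A cache built from `r_1, …, r_T` can only contain `j₀` if `j₀` was requested,
which by the union bound has probability at most `T p_K`. Hence
`𝔼[mass C_T] ≤ p* - Δ (1 - T p_K)`, and the cost decreases affinely in the mass with slope `ρ`. -/

theorem sum_le_sum_sub_card_sdiff_mul {ι R : Type*} [DecidableEq ι] [CommRing R] [LinearOrder R]
    [IsStrictOrderedRing R] {s t : Finset ι} {f : ι → R} {a b : R}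
    (hcard : #t ≤ #s) (ha : ∀ i ∈ s \ t, a ≤ f i) (hb : ∀ i ∈ t \ s, f i ≤ b) (hb0 : 0 ≤ b) :
    ∑ i ∈ t, f i ≤ ∑ i ∈ s, f i - #(s \ t) * (a - b) := by
  have hs := sum_inter_add_sum_sdiff s t f
  have ht := sum_inter_add_sum_sdiff t s f
  rw [inter_comm] at ht
  have hlow : #(s \ t) • a ≤ ∑ i ∈ s \ t, f i := card_nsmul_le_sum _ _ _ ha
  have hup : ∑ i ∈ t \ s, f i ≤ #(t \ s) • b := sum_le_card_nsmul _ _ _ hb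
  have hts : (#(t \ s) : R) ≤ #(s \ t) := by exact_mod_cast card_sdiff_le_card_sdiff_iff.2 hcard
  rw [nsmul_eq_mul] at hlow hup
  nlinarith [mul_le_mul_of_nonneg_right hts hb0]

-- Items are `0`-indexed, so this is the paper's `{1, …, K}`.
def priorCache (M K : ℕ) : Finset (Fin M) := univ.filter fun j : Fin M => (j : ℕ) < K

section PriorCache

variable {R : Type*} [CommRing R] [LinearOrder R] [IsStrictOrderedRing R]
  {M K : ℕ} {p : Fin M → R} {C : Finset (Fin M)}

theorem mem_priorCache {j : Fin M} : j ∈ priorCache M K ↔ (j : ℕ) < K := by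
  simp [priorCache]

theorem card_priorCache (hKM : K < M) : #(priorCache M K) = K := by
  have : priorCache M K = Iio ⟨K, hKM⟩ := by ext; simp [mem_priorCache, Fin.lt_def]
  rw [this, Fin.card_Iio]

theorem sum_le_sum_priorCache_sub_mul (hKM : K < M) (hp : Antitone p) (hp0 : 0 ≤ p)
    (hC : #C ≤ K) {j : Fin M} (hj : ∀ i ∈ priorCache M K, i ≤ j) :
    ∑ i ∈ C, p i ≤ ∑ i ∈ priorCache M K, p i - #(priorCache M K \ C) * (p j - p ⟨K, hKM⟩) := by
  refine sum_le_sum_sub_card_sdiff_mul (hC.trans (card_priorCache hKM).ge)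
    (fun i hi => hp (hj i (mem_sdiff.1 hi).1)) (fun i hi => hp ?_) (hp0 _)
  exact Fin.le_def.2 (not_lt.1 (mt mem_priorCache.2 (mem_sdiff.1 hi).2))

theorem sum_le_sum_priorCache (hKM : K < M) (hp : Antitone p) (hp0 : 0 ≤ p) (hC : #C ≤ K) :
    ∑ i ∈ C, p i ≤ ∑ i ∈ priorCache M K, p i := by
  have := sum_le_sum_priorCache_sub_mul hKM hp hp0 hC (j := ⟨K, hKM⟩)
    fun i hi => Fin.le_def.2 (mem_priorCache.1 hi).le
  simpa using this

theorem sum_le_sum_priorCache_sub_gap (hK : 1 ≤ K) (hKM : K < M) (hp : Antitone p)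
    (hp0 : 0 ≤ p) (hC : #C ≤ K) (hmiss : ⟨K - 1, by omega⟩ ∉ C) :
    ∑ i ∈ C, p i ≤ ∑ i ∈ priorCache M K, p i - (p ⟨K - 1, by omega⟩ - p ⟨K, hKM⟩) := by
  have hbound := sum_le_sum_priorCache_sub_mul hKM hp hp0 hC (j := ⟨K - 1, by omega⟩)
    fun i hi => Fin.le_def.2 (by have := mem_priorCache.1 hi; simp; omega)
  have hgap : 0 ≤ p ⟨K - 1, by omega⟩ - p ⟨K, hKM⟩ := sub_nonneg.2 (hp (Fin.le_def.2 (by simp)))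
  have hcard : (1 : R) ≤ #(priorCache M K \ C) := by
    exact_mod_cast card_pos.2 ⟨_, mem_sdiff.2 ⟨mem_priorCache.2 (by simp; omega), hmiss⟩⟩
  nlinarith

end PriorCache

def cacheCost {ι : Type*} (p : ι → ℝ) (Cc Cl : ℝ) (C : Finset ι) : ℝ :=
  (1 - ∑ i ∈ C, p i) * Cc + (∑ i ∈ C, p i) * Cl

section Probability

variable {Ω ι α : Type*} [MeasurableSpace Ω] {μ : Measure Ω}

theorem one_sub_mul_le_measureReal_forall_ne [IsProbabilityMeasure μ] {X : ℕ → Ω → α} {a : α}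
    {q : ℝ} {T : ℕ} (h : ∀ k < T, μ.real {ω | X k ω = a} ≤ q) :
    1 - T * q ≤ μ.real {ω | ∀ k < T, X k ω ≠ a} := by
  have hunion : μ.real {ω | ∃ k < T, X k ω = a} ≤ T * q :=
    calc μ.real {ω | ∃ k < T, X k ω = a} = μ.real (⋃ k ∈ range T, {ω | X k ω = a}) := by
          congr 1; ext; simp
      _ ≤ ∑ k ∈ range T, μ.real {ω | X k ω = a} := measureReal_biUnion_finset_le _ _
      _ ≤ ∑ _k ∈ range T, q := sum_le_sum fun k hk => h k (mem_range.1 hk)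
      _ = T * q := by simp
  have hcover : 1 ≤ μ.real {ω | ∀ k < T, X k ω ≠ a} + μ.real {ω | ∃ k < T, X k ω = a} :=
    calc (1 : ℝ) = μ.real ({ω | ∀ k < T, X k ω ≠ a} ∪ {ω | ∃ k < T, X k ω = a}) := by
          rw [← probReal_univ (μ := μ), ← Set.union_compl_self {ω | ∀ k < T, X k ω ≠ a}]
          congr 3; ext; simp
      _ ≤ _ := measureReal_union_le _ _
  linarith

theorem integral_le_sub_mul_measureReal [IsProbabilityMeasure μ] {f : Ω → ℝ} {A : Set Ω}
    {c d : ℝ} (hf : Integrable f μ) (hA : MeasurableSet A) (hle : ∀ ω, f ω ≤ c)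
    (hleA : ∀ ω ∈ A, f ω ≤ c - d) :
    ∫ ω, f ω ∂μ ≤ c - d * μ.real A :=
  have hg : Integrable (fun ω => c - A.indicator (fun _ => d) ω) μ :=
    (integrable_const c).sub ((integrable_const d).indicator hA)
  calc ∫ ω, f ω ∂μ ≤ ∫ ω, c - A.indicator (fun _ => d) ω ∂μ :=
        integral_mono hf hg fun ω => by by_cases hω : ω ∈ A <;> simp [hω, hle, hleA]
    _ = c - d * μ.real A := by
        rw [integral_sub (integrable_const c) ((integrable_const d).indicator hA), integral_const,
          integral_indicator_const _ hA]
        simp [mul_comm]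

theorem integrable_sum_of_measurable [Fintype ι] [IsFiniteMeasure μ] {S : Ω → Finset ι}
    (hS : Measurable S) (p : ι → ℝ) : Integrable (fun ω => ∑ i ∈ S ω, p i) μ := by
  refine Integrable.of_bound ((measurable_of_countable fun s : Finset ι => ∑ i ∈ s, p i).comp hS).aestronglyMeasurable
    (∑ i, ‖p i‖) (ae_of_all _ fun ω => ?_)
  exact (norm_sum_le _ _).trans
    (sum_le_sum_of_subset_of_nonneg (subset_univ _) fun i _ _ => norm_nonneg _)

theorem integral_cacheCost_sub [IsProbabilityMeasure μ] {p : ι → ℝ} {Cc Cl : ℝ}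
    {S : Ω → Finset ι} (hS : Integrable (fun ω => ∑ i ∈ S ω, p i) μ) (Q : Finset ι) :
    ∫ ω, cacheCost p Cc Cl (S ω) ∂μ - cacheCost p Cc Cl Q
      = (Cc - Cl) * (∑ i ∈ Q, p i - ∫ ω, ∑ i ∈ S ω, p i ∂μ) := by
  have hcost : (fun ω => cacheCost p Cc Cl (S ω)) = fun ω => Cc - (Cc - Cl) * ∑ i ∈ S ω, p i := by
    funext ω; simp only [cacheCost]; ring
  rw [hcost, integral_sub (integrable_const _) (hS.const_mul _), integral_const,
    integral_const_mul]
  simp only [cacheCost, probReal_univ, one_smul]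
  ring

end Probability

/-- **Prior-guided caching advantage, Theorem 5.6.**
Requests `(r_k)` are i.i.d. over `Fin M` with probabilities `p_1 ≥ ⋯ ≥ p_M > 0`
summing to one (0-indexed as `p : Fin M → ℝ`); `1 ≤ K < M`, `Δ = p_K - p_{K+1}`,
`p* = ∑_{j=1}^K p_j`.  Costs `C_c > C_l ≥ 0`, `ρ = C_c - C_l`; the per-request cost of
a cache `C` is `(1 - ∑_{i ∈ C} p_i)·C_c + (∑_{i ∈ C} p_i)·C_l`, and
`C^prior = (1 - p*)·C_c + p*·C_l`.  If `C_T` is any random cache that is a measurable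
function of `(r_1, …, r_T)`, has size at most `K`, and contains only previously
requested items, then `𝔼[cost(C_T)] - C^prior ≥ Δ·ρ·(1 - T·p_K)`; in particular the
expected advantage is strictly positive whenever `Δ > 0` and `T < 1/p_K`. -/
theorem prior_guided_caching_advantage {Ω : Type*} [MeasurableSpace Ω]
    (μ : Measure Ω) [IsProbabilityMeasure μ]
    (M : ℕ) (p : Fin M → ℝ)
    (hmono : ∀ i j : Fin M, i ≤ j → p j ≤ p i)
    (hpos : ∀ j : Fin M, 0 < p j)
    (r : ℕ → Ω → Fin M)
    (hmeas : ∀ k, Measurable (r k))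
    (hdist : ∀ (k : ℕ) (j : Fin M), μ {ω | r k ω = j} = ENNReal.ofReal (p j))
    (K : ℕ) (hK1 : 1 ≤ K) (hKM : K < M)
    (Cc Cl : ℝ) (hClCc : Cl < Cc)
    (T : ℕ)
    (CT : Ω → Finset (Fin M))
    (hfun : ∃ F : (Fin T → Fin M) → Finset (Fin M),
      ∀ ω, CT ω = F (fun k => r (k : ℕ) ω))
    (hcard : ∀ ω, (CT ω).card ≤ K)
    (hseen : ∀ ω, ∀ i ∈ CT ω, ∃ k < T, r k ω = i) :
    ((p ⟨K - 1, by omega⟩ - p ⟨K, hKM⟩) * (Cc - Cl) * (1 - (T : ℝ) * p ⟨K - 1, by omega⟩)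
      ≤ (∫ ω, ((1 - ∑ i ∈ CT ω, p i) * Cc + (∑ i ∈ CT ω, p i) * Cl) ∂μ)
          - ((1 - ∑ j ∈ Finset.univ.filter (fun j : Fin M => (j : ℕ) < K), p j) * Cc
              + (∑ j ∈ Finset.univ.filter (fun j : Fin M => (j : ℕ) < K), p j) * Cl)) ∧
    (0 < p ⟨K - 1, by omega⟩ - p ⟨K, hKM⟩ → (T : ℝ) < 1 / p ⟨K - 1, by omega⟩ →
      0 < (∫ ω, ((1 - ∑ i ∈ CT ω, p i) * Cc + (∑ i ∈ CT ω, p i) * Cl) ∂μ)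
            - ((1 - ∑ j ∈ Finset.univ.filter (fun j : Fin M => (j : ℕ) < K), p j) * Cc
                + (∑ j ∈ Finset.univ.filter (fun j : Fin M => (j : ℕ) < K), p j) * Cl)) := by
  obtain ⟨F, hF⟩ := hfun
  set j₀ : Fin M := ⟨K - 1, by omega⟩
  set Δ := p j₀ - p ⟨K, hKM⟩
  set A := {ω | ∀ k < T, r k ω ≠ j₀}
  have hp0 : 0 ≤ p := fun j => (hpos j).le
  have hCT : Measurable CT := by
    rw [show CT = F ∘ fun ω k => r k ω from funext hF]
    exact (measurable_of_countable F).comp (measurable_pi_lambda _ fun k => hmeas k)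
  have hA : MeasurableSet A := by
    rw [show A = ⋂ k, ⋂ (_ : k < T), r k ⁻¹' {j₀}ᶜ by ext; simp [A]]
    exact .iInter fun k => .iInter fun _ => (measurableSet_singleton j₀).compl.preimage (hmeas k)
  have hPA : 1 - T * p j₀ ≤ μ.real A := one_sub_mul_le_measureReal_forall_ne fun k _ => by
    rw [measureReal_def, hdist, ENNReal.toReal_ofReal (hpos _).le]
  have hint := integrable_sum_of_measurable (μ := μ) hCT p
  have hmass : ∫ ω, ∑ i ∈ CT ω, p i ∂μ ≤ ∑ i ∈ priorCache M K, p i - Δ * μ.real A :=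
    integral_le_sub_mul_measureReal hint hA
      (fun ω => sum_le_sum_priorCache hKM hmono hp0 (hcard ω))
      fun ω hω => sum_le_sum_priorCache_sub_gap hK1 hKM hmono hp0 (hcard ω) fun hmem => by
        obtain ⟨k, hk, hrk⟩ := hseen ω _ hmem
        exact hω k hk hrk
  have hΔ : 0 ≤ Δ := sub_nonneg.2 (hmono _ _ (Fin.le_def.2 (show K - 1 ≤ K by omega)))
  have hadv : Δ * (Cc - Cl) * (1 - T * p j₀)
      ≤ ∫ ω, cacheCost p Cc Cl (CT ω) ∂μ - cacheCost p Cc Cl (priorCache M K) := by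
    rw [integral_cacheCost_sub hint]
    nlinarith [mul_le_mul_of_nonneg_left hPA hΔ, sub_pos.2 hClCc]
  refine ⟨hadv, fun hΔpos hT => hadv.trans_lt' ?_⟩
  have hTp : T * p j₀ < 1 := (lt_div_iff₀ (hpos _)).1 hT
  exact mul_pos (mul_pos hΔpos (sub_pos.2 hClCc)) (sub_pos.2 hTp)
end
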